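/- Let A₁ ↪ A₂ ↠ A₃ be a short exact sequence of abelian groups, R₂ an A₂-torsor, and τ : R₂ ∧_{A₂} A₃ → A₃ a trivialization of the contracted A₃-torsor. Then R₁ := { r ∈ R₂ : τ([r, 1]) = 1 } is an A₁-torsor (the A₁-action is inherited from A₂ via α), and the contraction R₁ ∧_{A₁} A₂ is canonically isomorphic to R₂ as an A₂-torsor. -/

import Mathlib

/-- The contraction relation: for an `A₂`-set `R₂` and a homomorphism
`β : A₂ →* A₃`, the contraction `R₂ ∧_{A₂} A₃` is the quotient of `R₂ × A₃`
by the relation `(a • r, c) ∼ (r, β a * c)`. -/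
def contrRel {A₂ A₃ R₂ : Type} [CommGroup A₂] [CommGroup A₃] [MulAction A₂ R₂]
    (β : A₂ →* A₃) : (R₂ × A₃) → (R₂ × A₃) → Prop :=
  fun p q => ∃ a : A₂, p.1 = a • q.1 ∧ q.2 = β a * p.2

/-!
An `A₃`-equivariant `τ` satisfies `τ[b • r, 1] = β b * τ[r, 1]`. Hence `b • r` stays in
`R₁ = {r | τ[r, 1] = 1}` exactly when `β b = 1`, i.e. when `b` comes from `A₁`; this gives
stability and simple transitivity of the `A₁`-action, as well as the fibers of
`(r, b) ↦ b • r`. Surjectivity of `β` lets us move any point of `R₂` into `R₁`.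
-/

section Contraction

variable {A₂ A₃ R₂ : Type} [CommGroup A₂] [CommGroup A₃] [MulAction A₂ R₂] {β : A₂ →* A₃}

theorem contrRel_mk_smul (a : A₂) (r : R₂) (c : A₃) :
    Quot.mk (contrRel β) (a • r, c) = Quot.mk _ (r, β a * c) :=
  Quot.sound ⟨a, rfl, rfl⟩

def unitFiber (τ : Quot (contrRel (R₂ := R₂) β) → A₃) : Set R₂ :=
  {r | τ (Quot.mk _ (r, 1)) = 1}

variable {τ : Quot (contrRel (R₂ := R₂) β) → A₃}
  (heq : ∀ (r : R₂) (c c' : A₃), τ (Quot.mk _ (r, c * c')) = c * τ (Quot.mk _ (r, c')))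
include heq

theorem trivialization_mk_smul (a : A₂) (r : R₂) :
    τ (Quot.mk _ (a • r, 1)) = β a * τ (Quot.mk _ (r, 1)) := by
  rw [contrRel_mk_smul, heq]

theorem smul_mem_unitFiber_iff {r : R₂} (hr : r ∈ unitFiber τ) (b : A₂) :
    b • r ∈ unitFiber τ ↔ β b = 1 := by
  change τ _ = 1 ↔ _
  rw [trivialization_mk_smul heq, show τ (Quot.mk _ (r, 1)) = 1 from hr, mul_one]

theorem unitFiber_nonempty (hβ : Function.Surjective β) [Nonempty R₂] :
    (unitFiber τ).Nonempty := by
  obtain ⟨r₀⟩ := ‹Nonempty R₂›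
  obtain ⟨b, hb⟩ := hβ (τ (Quot.mk _ (r₀, 1)))⁻¹
  exact ⟨b • r₀, show τ _ = 1 by rw [trivialization_mk_smul heq, hb, inv_mul_cancel]⟩

end Contraction

theorem stmt16_general {A₁ A₂ A₃ R₂ : Type} [CommGroup A₁] [CommGroup A₂] [CommGroup A₃]
    [MulAction A₂ R₂] (α : A₁ →* A₂) (β : A₂ →* A₃)
    (hα : Function.Injective α) (hβ : Function.Surjective β)
    (hexact : ∀ b : A₂, β b = 1 ↔ ∃ a : A₁, α a = b)
    (hne : Nonempty R₂)
    (htorsor : ∀ r r' : R₂, ∃! b : A₂, r' = b • r)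
    (τ : Quot (contrRel (R₂ := R₂) β) → A₃)
    (heq : ∀ (r : R₂) (c c' : A₃),
      τ (Quot.mk _ (r, c * c')) = c * τ (Quot.mk _ (r, c'))) :
    -- `R₁` is stable under the `A₁`-action through `α`
    (∀ (a : A₁) (r : R₂), τ (Quot.mk _ (r, 1)) = 1 →
      τ (Quot.mk _ (α a • r, 1)) = 1) ∧
    -- `R₁` is nonempty
    (∃ r : R₂, τ (Quot.mk _ (r, 1)) = 1) ∧
    -- `A₁` acts simply transitively on `R₁`
    (∀ r r' : R₂, τ (Quot.mk _ (r, 1)) = 1 → τ (Quot.mk _ (r', 1)) = 1 →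
      ∃! a : A₁, r' = α a • r) ∧
    -- the canonical map `R₁ ∧_{A₁} A₂ → R₂`, `(r,b) ↦ b • r`, is surjective
    (∀ r' : R₂, ∃ (r : R₂) (b : A₂), τ (Quot.mk _ (r, 1)) = 1 ∧ r' = b • r) ∧
    -- and injective on the contraction: its fibers are the contraction classes
    (∀ (r r' : R₂) (b b' : A₂),
      τ (Quot.mk _ (r, 1)) = 1 → τ (Quot.mk _ (r', 1)) = 1 →
      b • r = b' • r' → ∃ a : A₁, r' = α a • r ∧ b = b' * α a) := by
  have mem_range_of_smul_mem {r : R₂} (hr : r ∈ unitFiber τ) {b : A₂}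
      (hbr : b • r ∈ unitFiber τ) : ∃ a, α a = b :=
    (hexact b).1 ((smul_mem_unitFiber_iff heq hr b).1 hbr)
  obtain ⟨r₀, hr₀⟩ := unitFiber_nonempty heq hβ
  refine ⟨fun a r hr => (smul_mem_unitFiber_iff heq hr _).2 ((hexact _).2 ⟨a, rfl⟩),
    ⟨r₀, hr₀⟩, ?_, ?_, ?_⟩
  · intro r r' hr hr'
    obtain ⟨b, rfl, hb_unique⟩ := htorsor r r'
    obtain ⟨a, rfl⟩ := mem_range_of_smul_mem hr hr'
    exact ⟨a, rfl, fun a' ha' => hα (hb_unique _ ha')⟩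
  · intro r'
    obtain ⟨b, hb, -⟩ := htorsor r₀ r'
    exact ⟨r₀, b, hr₀, hb⟩
  · intro r r' b b' hr hr' hbb
    have hr'_eq : r' = (b'⁻¹ * b) • r := by
      rw [mul_smul, hbb, inv_smul_smul]
    obtain ⟨a, ha⟩ := mem_range_of_smul_mem hr (hr'_eq ▸ hr')
    exact ⟨a, ha ▸ hr'_eq, by rw [ha, mul_inv_cancel_left]⟩

/-- Given a short exact sequence `A₁ ↪ A₂ ↠ A₃`, an `A₂`-torsor `R₂`, and a
trivialization `τ` of the contraction `R₂ ∧_{A₂} A₃`, the set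
`R₁ = {r : τ[(r,1)] = 1}` is an `A₁`-torsor (acting through `α`), and the
contraction `R₁ ∧_{A₁} A₂` is canonically isomorphic to `R₂` via
`(r, b) ↦ b • r`. -/
theorem stmt16 {A₁ A₂ A₃ R₂ : Type} [CommGroup A₁] [CommGroup A₂] [CommGroup A₃]
    [MulAction A₂ R₂] (α : A₁ →* A₂) (β : A₂ →* A₃)
    (hα : Function.Injective α) (hβ : Function.Surjective β)
    (hexact : ∀ b : A₂, β b = 1 ↔ ∃ a : A₁, α a = b)
    (hne : Nonempty R₂)
    (htorsor : ∀ r r' : R₂, ∃! b : A₂, r' = b • r)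
    (τ : Quot (contrRel (R₂ := R₂) β) → A₃)
    (hbij : Function.Bijective τ)
    (heq : ∀ (r : R₂) (c c' : A₃),
      τ (Quot.mk _ (r, c * c')) = c * τ (Quot.mk _ (r, c'))) :
    -- `R₁` is stable under the `A₁`-action through `α`
    (∀ (a : A₁) (r : R₂), τ (Quot.mk _ (r, 1)) = 1 →
      τ (Quot.mk _ (α a • r, 1)) = 1) ∧
    -- `R₁` is nonempty
    (∃ r : R₂, τ (Quot.mk _ (r, 1)) = 1) ∧
    -- `A₁` acts simply transitively on `R₁`
    (∀ r r' : R₂, τ (Quot.mk _ (r, 1)) = 1 → τ (Quot.mk _ (r', 1)) = 1 →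
      ∃! a : A₁, r' = α a • r) ∧
    -- the canonical map `R₁ ∧_{A₁} A₂ → R₂`, `(r,b) ↦ b • r`, is surjective
    (∀ r' : R₂, ∃ (r : R₂) (b : A₂), τ (Quot.mk _ (r, 1)) = 1 ∧ r' = b • r) ∧
    -- and injective on the contraction: its fibers are the contraction classes
    (∀ (r r' : R₂) (b b' : A₂),
      τ (Quot.mk _ (r, 1)) = 1 → τ (Quot.mk _ (r', 1)) = 1 →
      b • r = b' • r' → ∃ a : A₁, r' = α a • r ∧ b = b' * α a) :=
  stmt16_general α β hα hβ hexact hne htorsor τ heq
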